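/- arXiv:2110.07060 — 4 statements merged into one kernel-verified Lean document; each statement's English description precedes it below -/
import Mathlib

section
/- Let R be a commutative ring, n ≥ 1 an integer, and σ a permutation of {1,…,n}. Then in the polynomial ring R[X] one has det(I_n − X·P_σ) = ∏_{j=1}^{n} (1 − X^j)^{m_j(σ)}, where the permutation matrix P_σ is regarded as a matrix with entries in R[X]. -/
/-! If `σ` and `τ` are disjoint then `P_σ + P_τ = 1 + P_{στ}` and `P_σ P_τ = P_{στ}`, so
`(1 - X P_σ)(1 - X P_τ) = (1 - X)(1 - X P_{στ})`. As `1 - X` is a non-zero-divisor in `R[X]`,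
this reduces the formula to a single cycle `c` of length `k`, where only the identity and `c`
itself contribute to the Leibniz expansion of `det (1 - X P_c)`, giving
`(1 - X)^(n - k) (1 - X^k)`. Fixed points then appear as the parts `1` of the cycle-type
partition of `σ`. -/

open Polynomial Matrix Finset Equiv

theorem Polynomial.isRegular_one_sub_X {R : Type*} [Ring R] : IsRegular (1 - X : R[X]) := by
  have h : (1 - X : R[X]) = -1 * (X - C 1) := by rw [C_1]; noncomm_ring
  exact h ▸ isUnit_one.neg.isRegular.mul (monic_X_sub_C 1).isRegular

theorem Nat.Partition.prod_map_parts_eq_prod_Icc {M : Type*} [CommMonoid M] {n : ℕ}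
    (p : n.Partition) (f : ℕ → M) :
    (p.parts.map f).prod = ∏ j ∈ Icc 1 n, f j ^ p.parts.count j := by
  rw [prod_multiset_map_count]
  refine prod_subset (fun j hj => ?_) fun j _ hj => ?_
  · rw [Multiset.mem_toFinset] at hj
    exact mem_Icc.2 ⟨p.parts_pos hj, p.le_of_mem_parts hj⟩
  · rw [Multiset.count_eq_zero_of_notMem (by simpa using hj), pow_zero]

namespace Equiv.Perm

variable {ι : Type*} [DecidableEq ι]

theorem Disjoint.permMatrix_add {R : Type*} [AddCommMonoidWithOne R] {σ τ : Perm ι}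
    (h : σ.Disjoint τ) : σ.permMatrix R + τ.permMatrix R = 1 + (σ * τ).permMatrix R := by
  ext i j
  rcases h i with hσ | hτ
  · have hστ : σ (τ i) = τ i := by rw [← mul_apply, h.commute.eq, mul_apply, hσ]
    simp [Matrix.one_apply, hσ, hστ]
  · simp [Matrix.one_apply, hτ, add_comm]

variable [Fintype ι]

theorem Disjoint.one_sub_smul_permMatrix_mul {S : Type*} [CommRing S] {σ τ : Perm ι}
    (h : σ.Disjoint τ) (x : S) :
    (1 - x • σ.permMatrix S) * (1 - x • τ.permMatrix S) =
      (1 - x) • (1 - x • (σ * τ).permMatrix S) := by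
  have hmul : σ.permMatrix S * τ.permMatrix S = (σ * τ).permMatrix S := by
    rw [h.commute.eq, Matrix.permMatrix_mul]
  simp only [sub_mul, mul_sub, one_mul, mul_one, smul_mul_smul_comm]
  linear_combination (norm := module) (-x) • h.permMatrix_add (R := S) + x ^ 2 • hmul

theorem IsCycle.eq_one_or_eq_of_forall_apply_eq_or {c τ : Perm ι} (hc : c.IsCycle)
    (h : ∀ i, τ i = i ∨ τ i = c i) : τ = 1 ∨ τ = c := by
  by_cases hτ : τ = 1
  · exact .inl hτ
  obtain ⟨x, hx⟩ : ∃ x, τ x ≠ x := not_forall.mp fun h' => hτ (ext h')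
  -- the points moved by `τ` form a `c`-invariant set
  have step : ∀ y, τ y ≠ y → τ (c y) ≠ c y := fun y hy hcy =>
    have hτy : τ y = c y := (h y).resolve_left hy
    hy (hτy.trans (τ.injective (hcy.trans hτy.symm)))
  have moved : ∀ k : ℕ, τ ((c ^ k) x) ≠ (c ^ k) x := by
    intro k
    induction k with
    | zero => exact hx
    | succ k ih => rw [pow_succ', mul_apply]; exact step _ ih
  refine .inr (ext fun y => ?_)
  by_cases hy : c y = y
  · exact ((h y).elim id (·.trans hy)).trans hy.symm
  · obtain ⟨k, rfl⟩ := hc.exists_pow_eq (x := x) (by simpa [(h x).resolve_left hx] using hx) hy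
    exact (h _).resolve_left (moved k)

theorem card_filter_apply_eq_self (σ : Perm ι) :
    #{i | σ i = i} = Fintype.card ι - #σ.support := by
  rw [← card_compl]
  congr 1
  ext
  simp

theorem prod_ite_apply_eq_self {M : Type*} [CommMonoid M] (σ : Perm ι) (a b : M) :
    ∏ i, (if σ i = i then a else b) = a ^ (Fintype.card ι - #σ.support) * b ^ #σ.support := by
  rw [Finset.prod_ite, prod_const, prod_const, card_filter_apply_eq_self]
  rfl

theorem IsCycle.det_one_sub_smul_permMatrix {S : Type*} [CommRing S] {c : Perm ι}
    (hc : c.IsCycle) (x : S) :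
    det (1 - x • c.permMatrix S) =
      (1 - x) ^ (Fintype.card ι - #c.support) * (1 - x ^ #c.support) := by
  set M := 1 - x • c.permMatrix S
  have entry (i j : ι) : M i j = (if i = j then 1 else 0) - if c i = j then x else 0 := by
    simp [M, Matrix.one_apply]
  have diag (i : ι) : M i i = if c i = i then 1 - x else 1 := by
    by_cases h : c i = i <;> simp [entry, h]
  have along_c (i : ι) : M i (c i) = if c i = i then 1 - x else -x := by
    by_cases h : c i = i <;> simp [entry, h, eq_comm (a := i)]
  -- only `τ = 1` and `τ = c` avoid every zero entry of `M`
  rw [← det_transpose, det_apply', ← Finset.sum_subset (subset_univ {1, c}),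
    sum_pair hc.ne_one.symm]
  · have sq_neg_one : ((-1) ^ #c.support * (-1) ^ #c.support : S) = 1 := by
      rw [← mul_pow]; simp
    simp only [transpose_apply, one_apply, sign_one, Units.val_one, Int.cast_one, one_mul, diag,
      along_c, prod_ite_apply_eq_self, hc.sign, one_pow, mul_one, neg_pow x]
    push_cast
    linear_combination -(1 - x) ^ (Fintype.card ι - #c.support) * x ^ #c.support * sq_neg_one
  · intro τ _ hτ
    obtain ⟨i, hi, hci⟩ : ∃ i, τ i ≠ i ∧ τ i ≠ c i := by
      by_contra! h
      simp only [mem_insert, mem_singleton] at hτ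
      exact hτ (hc.eq_one_or_eq_of_forall_apply_eq_or fun i => or_iff_not_imp_left.2 (h i))
    rw [prod_eq_zero (mem_univ i), mul_zero]
    simp [entry, Ne.symm hi, Ne.symm hci]

theorem Disjoint.parts_partition_mul_add {σ τ : Perm ι} (h : σ.Disjoint τ) :
    (σ * τ).partition.parts + Multiset.replicate (Fintype.card ι) 1 =
      σ.partition.parts + τ.partition.parts := by
  have hle : #σ.support + #τ.support ≤ Fintype.card ι := by
    rw [← h.card_support_mul]; exact card_le_univ _
  simp only [parts_partition, h.cycleType_mul, h.card_support_mul]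
  rw [add_assoc, ← Multiset.replicate_add, add_add_add_comm, ← Multiset.replicate_add]
  congr 2
  omega

theorem count_one_parts_partition (σ : Perm ι) :
    σ.partition.parts.count 1 = Fintype.card ι - #σ.support := by
  have : 1 ∉ σ.cycleType := fun h => by simpa using two_le_of_mem_cycleType h
  simp [parts_partition, Multiset.count_eq_zero_of_notMem this]

theorem count_parts_partition {σ : Perm ι} {j : ℕ} (hj : 2 ≤ j) :
    σ.partition.parts.count j = σ.cycleType.count j := by
  simp [parts_partition, Multiset.count_replicate, show 1 ≠ j by omega]

theorem det_one_sub_X_smul_permMatrix_eq_prod_partition {R : Type*} [CommRing R]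
    (σ : Perm ι) :
    det (1 - (X : R[X]) • σ.permMatrix R[X]) =
      (σ.partition.parts.map fun j => 1 - X ^ j).prod := by
  induction σ using cycle_induction_on with
  | base_one =>
    have h : (1 : Matrix ι ι R[X]) - (X : R[X]) • 1 = (1 - X : R[X]) • 1 := by
      rw [sub_smul, one_smul]
    simp [h, parts_partition]
  | base_cycles c hc =>
    rw [hc.det_one_sub_smul_permMatrix, parts_partition, hc.cycleType]
    simp [mul_comm]
  | induction_disjoint σ τ hd _ hσ hτ =>
    refine (isRegular_one_sub_X.pow (Fintype.card ι)).left ?_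
    have hdet := congrArg det (hd.one_sub_smul_permMatrix_mul (X : R[X]))
    rw [det_mul, det_smul, hσ, hτ] at hdet
    have hparts := congrArg (fun s => (s.map fun j => (1 - X ^ j : R[X])).prod)
      hd.parts_partition_mul_add
    simp only [Multiset.map_add, Multiset.prod_add, Multiset.map_replicate,
      Multiset.prod_replicate, pow_one] at hparts
    exact hdet.symm.trans (hparts.symm.trans (mul_comm _ _))

end Equiv.Perm

theorem det_one_sub_X_smul_permMatrix_general
    (R : Type*) [CommRing R] (n : ℕ) (σ : Equiv.Perm (Fin n))
    (P : Matrix (Fin n) (Fin n) R[X])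
    (hP : ∀ i j, P i j = if σ j = i then 1 else 0)
    (m : ℕ → ℕ)
    (hm1 : m 1 = (Finset.univ.filter fun i : Fin n => σ i = i).card)
    (hm : ∀ j, 2 ≤ j → m j = Multiset.count j σ.cycleType) :
    Matrix.det (1 - (Polynomial.X : R[X]) • P) =
      ∏ j ∈ Finset.Icc 1 n, (1 - (Polynomial.X : R[X]) ^ j) ^ m j := by
  have hPσ : P = (σ.permMatrix R[X])ᵀ := by
    ext i j
    simp [hP]
  have hcount : ∀ j ∈ Icc 1 n, σ.partition.parts.count j = m j := by
    intro j hj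
    rcases (mem_Icc.1 hj).1.eq_or_lt with rfl | hj2
    · rw [hm1, Perm.count_one_parts_partition, Perm.card_filter_apply_eq_self, Fintype.card_fin]
    · rw [hm j hj2, Perm.count_parts_partition hj2]
  rw [hPσ, ← transpose_one, ← transpose_smul, ← transpose_sub, det_transpose,
    Perm.det_one_sub_X_smul_permMatrix_eq_prod_partition, Nat.Partition.prod_map_parts_eq_prod_Icc]
  exact prod_congr (by rw [Fintype.card_fin]) fun j hj => by rw [hcount j hj]

/-- For a commutative ring `R`, `n ≥ 1` and a permutation `σ` of `{1,…,n}`,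
the determinant of `I - X • P_σ` over `R[X]` equals `∏_{j=1}^n (1 - X^j)^{m_j(σ)}`, where
`m_j(σ)` is the number of cycles of `σ` of length `j` (fixed points counted as cycles of
length `1`). -/
theorem det_one_sub_X_smul_permMatrix
    (R : Type*) [CommRing R] (n : ℕ) (hn : 1 ≤ n) (σ : Equiv.Perm (Fin n))
    (P : Matrix (Fin n) (Fin n) R[X])
    (hP : ∀ i j, P i j = if σ j = i then 1 else 0)
    (m : ℕ → ℕ)
    (hm1 : m 1 = (Finset.univ.filter fun i : Fin n => σ i = i).card)
    (hm : ∀ j, 2 ≤ j → m j = Multiset.count j σ.cycleType) :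
    Matrix.det (1 - (Polynomial.X : R[X]) • P) =
      ∏ j ∈ Finset.Icc 1 n, (1 - (Polynomial.X : R[X]) ^ j) ^ m j :=
  det_one_sub_X_smul_permMatrix_general R n σ P hP m hm1 hm
end

section
/- Fix integers r ≥ 1 and n ≥ 1. Let F be the field of fractions of the polynomial ring ℚ[x,w] in two independent indeterminates x, w. For each integer j ≥ 0 define μ_j := (∏_{i=1}^{j}(1 − w^i)) · (1/j!) · Σ_{σ ∈ S_j} det(I_j + x·P_σ)^r / det(I_j − w·P_σ) ∈ F, with μ_0 = 1. Then μ_n = (1/n)·Σ_{k=1}^{n} f((−x)^k, w^k) · c_k(w) · μ_{n−k}, where f(x,w) := (1−x)^r/(1−w) and c_k(w) := ∏_{i=0}^{k−1}(1 − w^{n−i}). -/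
/-!
Write `μ_j = Q_j / j! · ∑_{σ ∈ S_j} W σ` with `Q_j = ∏_{i=1}^j (1 - w^i)` and
`W σ = det(1 + x P_σ)^r / det(1 - w P_σ)`. The weight `W` is invariant under relabelling, is
multiplicative over disjoint unions, and equals `f((-x)^k, w^k)` on a `k`-cycle, because
`det(1 + t P) = 1 - (-t)^k` for a `k`-cycle `P`. A permutation of `{0, …, n-1}` whose cycle through
`0` has length `k` is the same as the ordered list of the other `k - 1` points of that cycle
(`(n-1)!/(n-k)!` choices) together with a permutation of the remaining `n - k` points, so
`∑_{S_n} W = ∑_k (n-1)!/(n-k)! · f_k · ∑_{S_{n-k}} W`. Multiplying by `Q_n / n!` and using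
`Q_n = c_k · Q_{n-k}` gives the recursion.
-/

/-- The `j × j` permutation matrix of `σ`, with `(i,l)` entry `1` if `σ l = i`, else `0`. -/
noncomputable def permMatrix (F : Type*) [Zero F] [One F] {j : ℕ} (σ : Equiv.Perm (Fin j)) :
    Matrix (Fin j) (Fin j) F :=
  Matrix.of fun i l => if σ l = i then 1 else 0

/-- The field of fractions of `ℚ[x,w]` (two independent indeterminates). -/
noncomputable abbrev FF2 : Type _ := FractionRing (MvPolynomial (Fin 2) ℚ)

/-- The image of the first indeterminate `x` in the fraction field. -/
noncomputable def xx : FF2 := algebraMap (MvPolynomial (Fin 2) ℚ) FF2 (MvPolynomial.X 0)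

/-- The image of the second indeterminate `w` in the fraction field. -/
noncomputable def ww : FF2 := algebraMap (MvPolynomial (Fin 2) ℚ) FF2 (MvPolynomial.X 1)

/-- `μ_j = (∏_{i=1}^j (1 − w^i)) (1/j!) Σ_{σ ∈ S_j} det(I + x P_σ)^r / det(I − w P_σ)`
(so `μ_0 = 1`). -/
noncomputable def muRep (r : ℕ) (j : ℕ) : FF2 :=
  (∏ i ∈ Finset.Icc 1 j, (1 - ww ^ i)) * (j.factorial : FF2)⁻¹ *
    ∑ σ : Equiv.Perm (Fin j),
      (Matrix.det (1 + xx • permMatrix FF2 σ)) ^ r / Matrix.det (1 - ww • permMatrix FF2 σ)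

open Equiv Matrix Finset Function
open scoped Nat

section PermMatrixDet

variable {R : Type*} [CommRing R] {α β : Type*} [DecidableEq α] [DecidableEq β]

lemma permMatrix_permCongr (e : α ≃ β) (σ : Perm α) :
    Perm.permMatrix R (e.permCongr σ) = (σ.permMatrix R).submatrix e.symm e.symm := by
  ext i j
  simp [PEquiv.toMatrix_apply, permCongr_apply, eq_symm_apply]

lemma permMatrix_sumCongr (σ : Perm α) (τ : Perm β) :
    Perm.permMatrix R (sumCongr σ τ) = fromBlocks (σ.permMatrix R) 0 0 (τ.permMatrix R) := by
  ext (i | i) (j | j) <;> simp [PEquiv.toMatrix_apply]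

variable [Fintype α] [Fintype β]

lemma det_one_add_smul_permMatrix_permCongr (t : R) (e : α ≃ β) (σ : Perm α) :
    det (1 + t • Perm.permMatrix R (e.permCongr σ)) = det (1 + t • σ.permMatrix R) := by
  rw [permMatrix_permCongr, ← submatrix_one_equiv e.symm]
  exact det_submatrix_equiv_self e.symm (1 + t • σ.permMatrix R)

lemma det_one_add_smul_permMatrix_sumCongr (t : R) (σ : Perm α) (τ : Perm β) :
    det (1 + t • Perm.permMatrix R (sumCongr σ τ)) =
      det (1 + t • σ.permMatrix R) * det (1 + t • τ.permMatrix R) := by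
  rw [permMatrix_sumCongr, ← fromBlocks_one, fromBlocks_smul, fromBlocks_add]
  simp only [smul_zero, add_zero, det_fromBlocks_zero₂₁]

lemma Equiv.Perm.IsCycle.eq_one_or_eq_of_forall {c π : Perm α} (hc : c.IsCycle)
    (hs : c.support = univ) (h : ∀ i, π i = i ∨ π i = c i) : π = 1 ∨ π = c := by
  refine or_iff_not_imp_left.mpr fun hπ => ?_
  obtain ⟨a, ha⟩ : ∃ a, π a ≠ a := not_forall.mp fun h' => hπ (Equiv.ext h')
  have hfix : ∀ i, c i ≠ i := fun i => mem_support.mp (hs ▸ mem_univ i)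
  have step : ∀ i, π i = c i → π (c i) = c (c i) := fun i hi =>
    (h (c i)).resolve_left fun h' => hfix i (π.injective (h'.trans hi.symm))
  have iter : ∀ n : ℕ, π ((c ^ n) a) = c ((c ^ n) a) := by
    intro n
    induction n with
    | zero => exact (h a).resolve_left ha
    | succ n ih => rw [pow_succ', Perm.mul_apply]; exact step _ ih
  ext j
  obtain ⟨n, rfl⟩ := hc.exists_pow_eq (hfix a) (hfix j)
  exact iter n

lemma Equiv.Perm.IsCycle.det_one_add_smul_permMatrix {c : Perm α} (hc : c.IsCycle)
    (hs : c.support = univ) (t : R) :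
    det (1 + t • c.permMatrix R) = 1 - (-t) ^ Fintype.card α := by
  have hfix : ∀ i, c i ≠ i := fun i => mem_support.mp (hs ▸ mem_univ i)
  have hentry : ∀ π : Perm α, ∀ i,
      (1 + t • c.permMatrix R)ᵀ (π i) i = (if i = π i then 1 else 0) + if c i = π i then t else 0 :=
    fun π i => by simp [PEquiv.toMatrix_apply, Matrix.one_apply]
  -- in the Leibniz expansion only `π = 1` and `π = c` avoid the zero entries of `1 + t • P_c`
  have hvanish : ∀ π ∈ univ, π ∉ ({1, c} : Finset (Perm α)) →
      Perm.sign π • ∏ i, (1 + t • c.permMatrix R)ᵀ (π i) i = 0 := by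
    intro π _ hπ
    obtain ⟨i, hi⟩ : ∃ i, ¬(π i = i ∨ π i = c i) := by
      by_contra! h
      rcases hc.eq_one_or_eq_of_forall hs h with rfl | rfl <;> simp at hπ
    rw [not_or] at hi
    rw [prod_eq_zero (mem_univ i), smul_zero]
    rw [hentry, if_neg (Ne.symm hi.1), if_neg (Ne.symm hi.2), add_zero]
  rw [← det_transpose, det_apply, ← sum_subset (subset_univ _) hvanish, sum_pair hc.ne_one.symm]
  simp [hfix, Ne.symm (hfix _), hc.sign, hs, Units.smul_def]
  ring

lemma det_one_add_smul_permMatrix_finRotate (t : R) (k : ℕ) :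
    det (1 + t • (finRotate (k + 1)).permMatrix R) = 1 - (-t) ^ (k + 1) := by
  cases k with
  | zero => simp [finRotate_one]
  | succ k =>
    rw [isCycle_finRotate.det_one_add_smul_permMatrix support_finRotate, Fintype.card_fin]

end PermMatrixDet

section PeriodicOrbits

open Fin.NatCast

variable {α β : Type*}

lemma Function.Semiconj.minimalPeriod_apply {g : α → β} {fa : α → α} {fb : β → β}
    (h : Semiconj g fa fb) (hg : Injective g) (x : α) :
    minimalPeriod fb (g x) = minimalPeriod fa x :=
  minimalPeriod_eq_minimalPeriod_iff.mpr fun n => by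
    rw [IsPeriodicPt, IsFixedPt, ← (h.iterate_right n).eq x, hg.eq_iff]
    rfl

lemma iterate_finRotate_apply (k n : ℕ) (i : Fin (k + 1)) :
    (finRotate (k + 1))^[n] i = i + (n : Fin (k + 1)) := by
  induction n with
  | zero => simp
  | succ n ih => rw [iterate_succ_apply', ih, finRotate_apply, Nat.cast_succ, add_assoc]

lemma minimalPeriod_finRotate (k : ℕ) (i : Fin (k + 1)) :
    minimalPeriod (finRotate (k + 1)) i = k + 1 :=
  Nat.dvd_right_iff_eq.mp fun n => by
    rw [← isPeriodicPt_iff_minimalPeriod_dvd, IsPeriodicPt, IsFixedPt, iterate_finRotate_apply,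
      add_eq_left, Fin.natCast_eq_zero]

lemma Function.IsPeriodicPt.semiconj_finRotate {f : α → α} {a : α} {k : ℕ}
    (h : IsPeriodicPt f (k + 1) a) :
    Semiconj (fun i : Fin (k + 1) => f^[i] a) (finRotate (k + 1)) f := fun i => by
  have hmod : ∀ n : ℕ, f^[((n : Fin (k + 1)) : ℕ)] a = f^[n] a := fun n => by
    rw [Fin.val_natCast, h.iterate_mod_apply]
  dsimp only
  rw [finRotate_apply, show i + 1 = ((i + 1 : ℕ) : Fin (k + 1)) by simp, hmod,
    iterate_succ_apply']

lemma Equiv.Perm.minimalPeriod_mem_Icc [Fintype α] (σ : Perm α) (a : α) :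
    minimalPeriod σ a ∈ Icc 1 (Fintype.card α) :=
  mem_Icc.mpr ⟨minimalPeriod_pos_of_mem_periodicPts (σ.injective.mem_periodicPts a),
    minimalPeriod_le_card⟩

lemma Equiv.semiconj_permCongr (e : α ≃ β) (σ : Perm α) : Semiconj e σ (e.permCongr σ) :=
  fun x => by simp [permCongr_apply]

lemma Equiv.Perm.semiconj_inl_sumCongr (σ : Perm α) (τ : Perm β) :
    Semiconj Sum.inl σ (Equiv.sumCongr σ τ) := fun _ => rfl

lemma Equiv.Perm.exists_sumCongr_eq [Finite α] [Finite β] {σ : Perm (α ⊕ β)} {ρ : Perm α}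
    (h : Semiconj Sum.inl ρ σ) : ∃ τ, Equiv.sumCongr ρ τ = σ := by
  obtain ⟨⟨ρ', τ⟩, hσ⟩ := mem_sumCongrHom_range_of_perm_mapsTo_inl (σ := σ)
    (by rintro _ ⟨a, rfl⟩; exact ⟨ρ a, h a⟩)
  obtain rfl : ρ' = ρ := Equiv.ext fun a => Sum.inl_injective <| by
    rw [h a, ← hσ]
    rfl
  exact ⟨τ, hσ⟩

end PeriodicOrbits

section CycleThroughZero

variable {m k : ℕ}

def consSuccEmb (f : Fin k ↪ Fin m) : Fin (k + 1) ↪ Fin (m + 1) :=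
  ⟨Fin.cons 0 (Fin.succ ∘ f), Fin.cons_injective_of_injective
    (by rintro ⟨i, hi⟩; exact Fin.succ_ne_zero _ hi) ((Fin.succ_injective _).comp f.injective)⟩

@[simp] lemma consSuccEmb_zero (f : Fin k ↪ Fin m) : consSuccEmb f 0 = 0 := rfl

@[simp] lemma consSuccEmb_succ (f : Fin k ↪ Fin m) (i : Fin k) :
    consSuccEmb f i.succ = (f i).succ := rfl

lemma card_compl_range_consSuccEmb (f : Fin k ↪ Fin m) :
    Fintype.card ((Set.range (consSuccEmb f))ᶜ : Set (Fin (m + 1))) = m - k := by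
  rw [Fintype.card_compl_set, Set.card_range_of_injective (consSuccEmb f).injective]
  simp

open Classical in
noncomputable def cycleEquiv (f : Fin k ↪ Fin m) :
    Fin (k + 1) ⊕ Fin (m - k) ≃ Fin (m + 1) :=
  ((consSuccEmb f).toEquivRange.sumCongr
    (Fintype.equivFinOfCardEq (card_compl_range_consSuccEmb f)).symm).trans
    (Equiv.Set.sumCompl _)

lemma cycleEquiv_comp_inl (f : Fin k ↪ Fin m) :
    cycleEquiv f ∘ Sum.inl = consSuccEmb f := by
  funext i
  simp [cycleEquiv]

-- The cycle through `0` is `0 ↦ f 0 + 1 ↦ ⋯ ↦ f (k - 1) + 1 ↦ 0`; the other `m - k` points are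
-- permuted by `τ`, read through an arbitrary enumeration of them.
noncomputable def consCycle (f : Fin k ↪ Fin m) (τ : Perm (Fin (m - k))) :
    Perm (Fin (m + 1)) :=
  (cycleEquiv f).permCongr (sumCongr (finRotate (k + 1)) τ)

lemma semiconj_consCycle (f : Fin k ↪ Fin m) (τ : Perm (Fin (m - k))) :
    Semiconj (consSuccEmb f) (finRotate (k + 1)) (consCycle f τ) := by
  rw [← cycleEquiv_comp_inl]
  exact (semiconj_permCongr _ _).comp_left (Perm.semiconj_inl_sumCongr _ τ)

lemma iterate_consCycle_zero (f : Fin k ↪ Fin m) (τ : Perm (Fin (m - k))) (i : Fin (k + 1)) :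
    (consCycle f τ)^[i] 0 = consSuccEmb f i := by
  rw [← consSuccEmb_zero f, ← ((semiconj_consCycle f τ).iterate_right i).eq,
    iterate_finRotate_apply, zero_add, Fin.cast_val_eq_self]

lemma minimalPeriod_consCycle (f : Fin k ↪ Fin m) (τ : Perm (Fin (m - k))) :
    minimalPeriod (consCycle f τ) 0 = k + 1 := by
  rw [← consSuccEmb_zero f, (semiconj_consCycle f τ).minimalPeriod_apply
    (consSuccEmb f).injective, minimalPeriod_finRotate]

lemma consCycle_injective : Injective (uncurry (consCycle (m := m) (k := k))) := by
  rintro ⟨f, τ⟩ ⟨f', τ'⟩ h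
  simp only [uncurry_apply_pair] at h
  obtain rfl : f = f' := by
    ext j : 1
    apply Fin.succ_injective
    rw [← consSuccEmb_succ, ← consSuccEmb_succ, ← iterate_consCycle_zero f τ,
      ← iterate_consCycle_zero f' τ', h]
  have hsum := (cycleEquiv f).permCongr.injective h
  rw [Prod.mk.injEq, eq_self, true_and]
  exact Equiv.ext fun x => Sum.inr_injective (congr($hsum (Sum.inr x)))

lemma exists_consCycle_eq {σ : Perm (Fin (m + 1))} (hσ : minimalPeriod σ 0 = k + 1) :
    ∃ (f : Fin k ↪ Fin m) (τ : Perm (Fin (m - k))), consCycle f τ = σ := by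
  have hper : IsPeriodicPt σ (k + 1) 0 := hσ ▸ isPeriodicPt_minimalPeriod σ 0
  have hne : ∀ j : Fin k, σ^[j + 1] 0 ≠ 0 := fun j h => by
    have := IsPeriodicPt.minimalPeriod_le (Nat.succ_pos _) h
    omega
  let f : Fin k ↪ Fin m := ⟨fun j => (σ^[j + 1] 0).pred (hne j), fun a b hab => by
    have := iterate_injOn_Iio_minimalPeriod (f := σ) (x := 0) (by simp [hσ]) (by simp [hσ])
      (Fin.pred_inj.mp hab)
    omega⟩
  have hf : ∀ i : Fin (k + 1), consSuccEmb f i = σ^[i] 0 := by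
    intro i
    cases i using Fin.cases <;> simp [f]
  have hsemi : Semiconj Sum.inl (finRotate (k + 1)) ((cycleEquiv f).symm.permCongr σ) := by
    have he : ∀ j, cycleEquiv f (Sum.inl j) = σ^[j] 0 := fun j =>
      (congrFun (cycleEquiv_comp_inl f) j).trans (hf j)
    intro i
    rw [permCongr_apply, symm_symm, eq_symm_apply, he, he]
    exact hper.semiconj_finRotate i
  obtain ⟨τ, hτ⟩ := Perm.exists_sumCongr_eq hsemi
  refine ⟨f, τ, ?_⟩
  rw [consCycle, hτ, ← permCongr_symm, Equiv.apply_symm_apply]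

lemma sum_filter_minimalPeriod_eq {M : Type*} [AddCommMonoid M] (W : Perm (Fin (m + 1)) → M) :
    ∑ σ ∈ univ.filter fun σ : Perm (Fin (m + 1)) => minimalPeriod σ 0 = k + 1, W σ =
      ∑ f : Fin k ↪ Fin m, ∑ τ : Perm (Fin (m - k)), W (consCycle f τ) := by
  rw [← Fintype.sum_prod_type']
  refine (sum_bij (fun p _ => uncurry consCycle p) (fun p _ => ?_)
    (fun p _ q _ h => consCycle_injective h) (fun σ hσ => ?_) (fun _ _ => rfl)).symm
  · exact mem_filter.mpr ⟨mem_univ _, minimalPeriod_consCycle p.1 p.2⟩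
  · obtain ⟨f, τ, rfl⟩ := exists_consCycle_eq (mem_filter.mp hσ).2
    exact ⟨(f, τ), mem_univ _, rfl⟩

end CycleThroughZero

section Weight

variable {K : Type*} [Field K] {α β : Type*} [DecidableEq α] [Fintype α] [DecidableEq β]
  [Fintype β]

noncomputable def permWeight (r : ℕ) (x w : K) (σ : Perm α) : K :=
  det (1 + x • σ.permMatrix K) ^ r / det (1 - w • σ.permMatrix K)

lemma permWeight_permCongr (r : ℕ) (x w : K) (e : α ≃ β) (σ : Perm α) :
    permWeight r x w (e.permCongr σ) = permWeight r x w σ := by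
  simp only [permWeight, sub_eq_add_neg, ← neg_smul, det_one_add_smul_permMatrix_permCongr]

lemma permWeight_sumCongr (r : ℕ) (x w : K) (σ : Perm α) (τ : Perm β) :
    permWeight r x w (Equiv.sumCongr σ τ) = permWeight r x w σ * permWeight r x w τ := by
  simp only [permWeight, sub_eq_add_neg, ← neg_smul, det_one_add_smul_permMatrix_sumCongr]
  rw [mul_pow, div_mul_div_comm]

lemma permWeight_finRotate (r : ℕ) (x w : K) (k : ℕ) :
    permWeight r x w (finRotate (k + 1)) = (1 - (-x) ^ (k + 1)) ^ r / (1 - w ^ (k + 1)) := by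
  rw [permWeight, sub_eq_add_neg, ← neg_smul, det_one_add_smul_permMatrix_finRotate,
    det_one_add_smul_permMatrix_finRotate, neg_neg]

lemma permWeight_consCycle (r : ℕ) (x w : K) {m k : ℕ}
    (f : Fin k ↪ Fin m) (τ : Perm (Fin (m - k))) :
    permWeight r x w (consCycle f τ) =
      (1 - (-x) ^ (k + 1)) ^ r / (1 - w ^ (k + 1)) * permWeight r x w τ := by
  rw [consCycle, permWeight_permCongr, permWeight_sumCongr, permWeight_finRotate]

lemma sum_permWeight_filter_minimalPeriod (r : ℕ) (x w : K) (m k : ℕ) :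
    ∑ σ ∈ univ.filter fun σ : Perm (Fin (m + 1)) => minimalPeriod σ 0 = k + 1,
        permWeight r x w σ =
      m.descFactorial k * ((1 - (-x) ^ (k + 1)) ^ r / (1 - w ^ (k + 1))) *
        ∑ τ : Perm (Fin (m - k)), permWeight r x w τ := by
  simp_rw [sum_filter_minimalPeriod_eq, permWeight_consCycle, ← mul_sum]
  rw [sum_const, card_univ, Fintype.card_embedding_eq, Fintype.card_fin, Fintype.card_fin,
    nsmul_eq_mul]
  ring

end Weight

lemma prod_range_sub_mul_prod_Icc {M : Type*} [CommMonoid M] (a : ℕ → M) {n k : ℕ}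
    (hk : k ≤ n) :
    (∏ i ∈ range k, a (n - i)) * ∏ i ∈ Icc 1 (n - k), a i = ∏ i ∈ Icc 1 n, a i := by
  induction k with
  | zero => simp
  | succ k ih =>
    rw [← ih (by omega), prod_range_succ, show n - k = n - (k + 1) + 1 by omega,
      prod_Icc_succ_top (by omega), mul_assoc, mul_comm (a _)]

lemma permMatrix_eq_transpose {F : Type*} [Zero F] [One F] {j : ℕ} (σ : Perm (Fin j)) :
    permMatrix F σ = (σ.permMatrix F)ᵀ := by
  ext i l
  simp [permMatrix, PEquiv.toMatrix_apply]

lemma det_one_add_smul_permMatrix_eq {K : Type*} [CommRing K] {j : ℕ} (t : K)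
    (σ : Perm (Fin j)) : det (1 + t • permMatrix K σ) = det (1 + t • σ.permMatrix K) := by
  rw [permMatrix_eq_transpose, ← det_transpose]
  simp

lemma muRep_eq_sum_permWeight (r j : ℕ) :
    muRep r j = (∏ i ∈ Icc 1 j, (1 - ww ^ i)) * (j ! : FF2)⁻¹ *
      ∑ σ : Perm (Fin j), permWeight r xx ww σ := by
  simp only [muRep, permWeight, sub_eq_add_neg, ← neg_smul, det_one_add_smul_permMatrix_eq]

theorem muRep_recursion_general (r : ℕ) (n : ℕ) (hn : 1 ≤ n) :
    muRep r n = (n : FF2)⁻¹ * ∑ k ∈ Finset.Icc 1 n,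
      ((1 - (-xx) ^ k) ^ r / (1 - ww ^ k)) *
        (∏ i ∈ Finset.range k, (1 - ww ^ (n - i))) * muRep r (n - k) := by
  obtain ⟨m, rfl⟩ : ∃ m, n = m + 1 := ⟨n - 1, by omega⟩
  have hperiod : ∀ σ ∈ (univ : Finset (Perm (Fin (m + 1)))),
      minimalPeriod σ 0 ∈ Icc 1 (m + 1) := fun σ _ => by
    simpa using σ.minimalPeriod_mem_Icc 0
  rw [muRep_eq_sum_permWeight, ← sum_fiberwise_of_maps_to hperiod, mul_sum, mul_sum]
  refine sum_congr rfl fun l hl => ?_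
  obtain ⟨k, rfl, hk⟩ : ∃ k, l = k + 1 ∧ k ≤ m := ⟨l - 1, by grind⟩
  rw [sum_permWeight_filter_minimalPeriod, muRep_eq_sum_permWeight, Nat.add_sub_add_right,
    ← prod_range_sub_mul_prod_Icc _ (by omega : k + 1 ≤ m + 1), Nat.add_sub_add_right]
  have hfac : ((m + 1)! : FF2) = (m + 1 : FF2) * (m - k)! * m.descFactorial k := by
    rw [mul_assoc]
    exact_mod_cast (by rw [Nat.factorial_succ, ← Nat.factorial_mul_descFactorial hk])
  have hdesc : (m.descFactorial k : FF2) ≠ 0 :=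
    Nat.cast_ne_zero.mpr (Nat.descFactorial_pos.mpr hk).ne'
  rw [hfac]
  field_simp
  push_cast
  ring

/-- For `r ≥ 1` and `n ≥ 1`:
`μ_n = (1/n) Σ_{k=1}^n f((−x)^k, w^k) c_k(w) μ_{n−k}`, where `f(x,w) = (1−x)^r/(1−w)` and
`c_k(w) = ∏_{i=0}^{k−1}(1 − w^{n−i})`. -/
theorem muRep_recursion (r : ℕ) (hr : 1 ≤ r) (n : ℕ) (hn : 1 ≤ n) :
    muRep r n = (n : FF2)⁻¹ * ∑ k ∈ Finset.Icc 1 n,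
      ((1 - (-xx) ^ k) ^ r / (1 - ww ^ k)) *
        (∏ i ∈ Finset.range k, (1 - ww ^ (n - i))) * muRep r (n - k) :=
  muRep_recursion_general r n hn
end

section
/- Fix integers r ≥ 1 and n ≥ 1, and let F be the field of fractions of the polynomial ring ℚ[x,w]. For σ ∈ S_n let f_σ be the coordinate-permutation endomorphism of F^n and g_σ its restriction to the invariant hyperplane V₀ = {v ∈ F^n : v_1 + ⋯ + v_n = 0}. Then (∏_{i=1}^{n}(1 − w^i)) · (1/n!) · Σ_{σ ∈ S_n} det(id + x·f_σ)^r / det(id − w·f_σ) = (1 + x)^r · (∏_{i=2}^{n}(1 − w^i)) · (1/n!) · Σ_{σ ∈ S_n} det(id_{V₀} + x·g_σ)^r / det(id_{V₀} − w·g_σ). (In other words, the mixed Hodge polynomial formula for the GL(n,ℂ)-representation variety equals (1+x)^r times the one for SL(n,ℂ).) -/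
/-- The coordinate-permutation endomorphism of `F^n`: `(f_σ v) i = v (σ⁻¹ i)`. -/
noncomputable def permEndo (F : Type*) [Field F] {n : ℕ} (σ : Equiv.Perm (Fin n)) :
    (Fin n → F) →ₗ[F] (Fin n → F) :=
  LinearMap.funLeft F F ⇑σ⁻¹

/-- The hyperplane `V₀ = {v ∈ F^n : v 1 + ⋯ + v n = 0}`. -/
noncomputable def zeroSumHyperplane (F : Type*) [Field F] (n : ℕ) :
    Submodule F (Fin n → F) :=
  LinearMap.ker (∑ i : Fin n, LinearMap.proj (R := F) (φ := fun _ : Fin n => F) i)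

/-!
The all-ones vector is fixed by every `f_σ` and, since `n ≠ 0` in `F`, spans a complement of
`V₀`. Hence `id + c • f_σ` is the direct sum of `id + c • g_σ` and the scalar `1 + c`, so
`det (id + c • f_σ) = (1 + c) · det (id + c • g_σ)`. Taking `c = x` and `c = -w`, each summand on
the left is `(1 + x)^r / (1 - w)` times the corresponding summand on the right, and `1 - w` is the
`i = 1` factor of `∏_{i=1}^n (1 - w^i)`.
-/

section InvariantComplement

variable {K V : Type*} [Field K] [AddCommGroup V] [Module K V] [FiniteDimensional K V]

theorem LinearMap.det_eq_det_restrict_mul_det_restrict {p q : Submodule K V} (hpq : IsCompl p q)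
    (f : Module.End K V) (hp : ∀ v ∈ p, f v ∈ p) (hq : ∀ v ∈ q, f v ∈ q) :
    f.det = (f.restrict hp).det * (f.restrict hq).det := by
  let e := Submodule.prodEquivOfIsCompl p q hpq
  have hconj : (e : p × q →ₗ[K] V) ∘ₗ (f.restrict hp).prodMap (f.restrict hq) ∘ₗ
      (e.symm : V →ₗ[K] p × q) = f := by
    ext v
    obtain ⟨⟨y, z⟩, rfl⟩ := e.surjective v
    simp [e, Submodule.coe_prodEquivOfIsCompl']
  rw [← LinearMap.det_prodMap, ← LinearMap.det_conj _ e, hconj]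

theorem LinearMap.det_id_add_smul_eq_one_add_mul_det_restrict {p : Submodule K V} {u : V}
    (hp : IsCoatom p) (hu : u ∉ p) (f : Module.End K V) (hfp : ∀ v ∈ p, f v ∈ p)
    (hfu : f u = u) (c : K) :
    (LinearMap.id + c • f).det = (1 + c) * (LinearMap.id + c • f.restrict hfp).det := by
  set g : Module.End K V := LinearMap.id + c • f
  have hg_span : ∀ v ∈ K ∙ u, g v = (1 + c) • v := by
    intro v hv
    obtain ⟨a, rfl⟩ := Submodule.mem_span_singleton.mp hv
    simp [g, hfu, add_smul, smul_comm c a]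
  have hgp : ∀ v ∈ p, g v ∈ p := fun v hv => p.add_mem hv (p.smul_mem c (hfp v hv))
  have hgu : ∀ v ∈ K ∙ u, g v ∈ K ∙ u := fun v hv =>
    hg_span v hv ▸ (K ∙ u).smul_mem _ hv
  have hg_restrict_p : g.restrict hgp = LinearMap.id + c • f.restrict hfp := by
    ext
    simp [g]
  have hg_restrict_u : g.restrict hgu = (1 + c) • LinearMap.id := by
    ext ⟨v, hv⟩
    simp [hg_span v hv]
  have hu0 : u ≠ 0 := fun h => hu (h ▸ p.zero_mem)
  rw [LinearMap.det_eq_det_restrict_mul_det_restrict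
      (Submodule.isCompl_span_singleton_of_isCoatom_of_notMem hp hu) g hgp hgu,
    hg_restrict_p, hg_restrict_u, LinearMap.det_smul, LinearMap.det_id,
    finrank_span_singleton hu0, pow_one, mul_one, mul_comm]

theorem LinearMap.det_id_sub_smul_eq_one_sub_mul_det_restrict {p : Submodule K V} {u : V}
    (hp : IsCoatom p) (hu : u ∉ p) (f : Module.End K V) (hfp : ∀ v ∈ p, f v ∈ p)
    (hfu : f u = u) (c : K) :
    (LinearMap.id - c • f).det = (1 - c) * (LinearMap.id - c • f.restrict hfp).det := by
  simpa only [neg_smul, neg_smul (M := Module.End K p), ← sub_eq_add_neg] using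
    LinearMap.det_id_add_smul_eq_one_add_mul_det_restrict hp hu f hfp hfu (-c)

end InvariantComplement

section PermutationRepresentation

variable {F : Type*} [Field F] {n : ℕ}

theorem permEndo_const (σ : Equiv.Perm (Fin n)) (a : F) :
    permEndo F σ (fun _ => a) = fun _ => a :=
  rfl

theorem isCoatom_zeroSumHyperplane (hn : n ≠ 0) : IsCoatom (zeroSumHyperplane F n) := by
  refine LinearMap.isCoatom_ker_of_surjective fun a =>
    ⟨Pi.single ⟨0, Nat.pos_of_ne_zero hn⟩ a, ?_⟩
  simp

theorem const_one_notMem_zeroSumHyperplane (hn : (n : F) ≠ 0) :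
    (fun _ => 1 : Fin n → F) ∉ zeroSumHyperplane F n := by
  simpa [zeroSumHyperplane] using hn

theorem det_id_add_smul_permEndo (hn : (n : F) ≠ 0) (σ : Equiv.Perm (Fin n))
    (h : ∀ v ∈ zeroSumHyperplane F n, permEndo F σ v ∈ zeroSumHyperplane F n) (c : F) :
    (LinearMap.id + c • permEndo F σ).det =
      (1 + c) * (LinearMap.id + c • (permEndo F σ).restrict h).det :=
  LinearMap.det_id_add_smul_eq_one_add_mul_det_restrict
    (isCoatom_zeroSumHyperplane (by rintro rfl; simp at hn))
    (const_one_notMem_zeroSumHyperplane hn) _ h (permEndo_const σ 1) c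

theorem det_id_sub_smul_permEndo (hn : (n : F) ≠ 0) (σ : Equiv.Perm (Fin n))
    (h : ∀ v ∈ zeroSumHyperplane F n, permEndo F σ v ∈ zeroSumHyperplane F n) (c : F) :
    (LinearMap.id - c • permEndo F σ).det =
      (1 - c) * (LinearMap.id - c • (permEndo F σ).restrict h).det :=
  LinearMap.det_id_sub_smul_eq_one_sub_mul_det_restrict
    (isCoatom_zeroSumHyperplane (by rintro rfl; simp at hn))
    (const_one_notMem_zeroSumHyperplane hn) _ h (permEndo_const σ 1) c

end PermutationRepresentation

theorem ww_ne_one : ww ≠ 1 := by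
  rw [ww, ← map_one (algebraMap (MvPolynomial (Fin 2) ℚ) FF2), Ne,
    (IsFractionRing.injective (MvPolynomial (Fin 2) ℚ) FF2).eq_iff]
  intro h
  simpa using congrArg MvPolynomial.constantCoeff h

theorem GL_formula_eq_one_add_x_pow_r_mul_SL_formula_general (r : ℕ) (n : ℕ) (hn : 1 ≤ n)
    (h : ∀ σ : Equiv.Perm (Fin n),
      ∀ v ∈ zeroSumHyperplane FF2 n, permEndo FF2 σ v ∈ zeroSumHyperplane FF2 n) :
    (∏ i ∈ Finset.Icc 1 n, (1 - ww ^ i)) * (n.factorial : FF2)⁻¹ *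
        ∑ σ : Equiv.Perm (Fin n),
          (LinearMap.det (LinearMap.id + xx • permEndo FF2 σ)) ^ r /
            LinearMap.det (LinearMap.id - ww • permEndo FF2 σ)
      = (1 + xx) ^ r * (∏ i ∈ Finset.Icc 2 n, (1 - ww ^ i)) * (n.factorial : FF2)⁻¹ *
        ∑ σ : Equiv.Perm (Fin n),
          (LinearMap.det (LinearMap.id + xx • (permEndo FF2 σ).restrict (h σ))) ^ r /
            LinearMap.det (LinearMap.id - ww • (permEndo FF2 σ).restrict (h σ)) := by
  have hn_ne_zero : (n : FF2) ≠ 0 := Nat.cast_ne_zero.mpr (by omega)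
  have hw : (1 : FF2) - ww ≠ 0 := sub_ne_zero.mpr ww_ne_one.symm
  have hsummand : ∀ σ : Equiv.Perm (Fin n),
      (LinearMap.id + xx • permEndo FF2 σ).det ^ r / (LinearMap.id - ww • permEndo FF2 σ).det
        = (1 + xx) ^ r / (1 - ww) *
          ((LinearMap.id + xx • (permEndo FF2 σ).restrict (h σ)).det ^ r /
            (LinearMap.id - ww • (permEndo FF2 σ).restrict (h σ)).det) := fun σ => by
    rw [det_id_add_smul_permEndo hn_ne_zero σ (h σ), det_id_sub_smul_permEndo hn_ne_zero σ (h σ),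
      mul_pow, mul_div_mul_comm]
  rw [Finset.sum_congr rfl fun σ _ => hsummand σ, ← Finset.mul_sum,
    ← Finset.insert_Icc_add_one_left_eq_Icc hn, Finset.prod_insert (by simp), pow_one,
    one_add_one_eq_two]
  field_simp

/-- For `r ≥ 1`, `n ≥ 1`, with `f_σ` the coordinate-permutation endomorphism
of `F^n` and `g_σ` its restriction to the invariant hyperplane `V₀`:
`(∏_{i=1}^n (1 − w^i)) (1/n!) Σ_σ det(id + x f_σ)^r / det(id − w f_σ)
  = (1+x)^r (∏_{i=2}^n (1 − w^i)) (1/n!) Σ_σ det(id + x g_σ)^r / det(id − w g_σ)`. -/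
theorem GL_formula_eq_one_add_x_pow_r_mul_SL_formula (r : ℕ) (hr : 1 ≤ r) (n : ℕ) (hn : 1 ≤ n)
    (h : ∀ σ : Equiv.Perm (Fin n),
      ∀ v ∈ zeroSumHyperplane FF2 n, permEndo FF2 σ v ∈ zeroSumHyperplane FF2 n) :
    (∏ i ∈ Finset.Icc 1 n, (1 - ww ^ i)) * (n.factorial : FF2)⁻¹ *
        ∑ σ : Equiv.Perm (Fin n),
          (LinearMap.det (LinearMap.id + xx • permEndo FF2 σ)) ^ r /
            LinearMap.det (LinearMap.id - ww • permEndo FF2 σ)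
      = (1 + xx) ^ r * (∏ i ∈ Finset.Icc 2 n, (1 - ww ^ i)) * (n.factorial : FF2)⁻¹ *
        ∑ σ : Equiv.Perm (Fin n),
          (LinearMap.det (LinearMap.id + xx • (permEndo FF2 σ).restrict (h σ))) ^ r /
            LinearMap.det (LinearMap.id - ww • (permEndo FF2 σ).restrict (h σ)) :=
  GL_formula_eq_one_add_x_pow_r_mul_SL_formula_general r n hn h
end

section
/- Let K be a field, V a finite-dimensional K-vector space of dimension d, and f : V → V a K-linear endomorphism. For 0 ≤ j ≤ d let ⋀^j f denote the induced endomorphism of the j-th exterior power ⋀^j V. Then in K[X]: Σ_{j=0}^{d} trace(⋀^j f)·X^j = reverse(charpoly(−f)), where charpoly(−f) = det(X·id + f) is the (monic, degree d) characteristic polynomial of −f and reverse denotes polynomial reversal p(X) ↦ X^d·p(1/X). Equivalently, the polynomial Σ_{j=0}^{d} trace(⋀^j f)·X^j equals det(id + X·f) after extending scalars to K[X]. -/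
/-!
For a basis `b` of `V` indexed by `Fin d`, the wedges `b_s` with `s ⊆ Fin d`, `#s = j`, form a
basis of `⋀^j V`, and the coefficient of `b_s` in `(⋀^j f) b_s` is the principal minor of the
matrix `A` of `f` on `s`. Hence `trace (⋀^j f)` is the sum of the `j × j` principal minors of
`A`, which is the coefficient of `X^j` in `det (1 + X • A) = reverse (charpoly (-f))`.
-/

open Polynomial

section

variable {R M N : Type*} [CommRing R] [AddCommGroup M] [Module R M] [AddCommGroup N] [Module R N]

theorem ExteriorAlgebra.map_mem_exteriorPower (f : M →ₗ[R] N) {n : ℕ} {x : ExteriorAlgebra R M}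
    (hx : x ∈ ⋀[R]^n M) : ExteriorAlgebra.map f x ∈ ⋀[R]^n N := by
  have : Submodule.map (ExteriorAlgebra.map f).toLinearMap (⋀[R]^n M) ≤ ⋀[R]^n N := by
    rw [ExteriorAlgebra.exteriorPower, Submodule.map_pow, ExteriorAlgebra.ι_range_map_map]
    exact pow_le_pow_left' LinearMap.map_le_range n
  exact this (Submodule.mem_map_of_mem hx)

theorem ExteriorAlgebra.restrict_map_eq_exteriorPower_map (n : ℕ) (f : M →ₗ[R] N) :
    (ExteriorAlgebra.map f).toLinearMap.restrict (fun _ => map_mem_exteriorPower f) =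
      exteriorPower.map n f := by
  ext v
  rw [LinearMap.compAlternatingMap_apply, LinearMap.compAlternatingMap_apply,
    exteriorPower.map_apply_ιMulti]
  exact ExteriorAlgebra.map_apply_ιMulti f v

section Basis

open Matrix

variable {ι : Type*} [Fintype ι] [LinearOrder ι] (b : Module.Basis ι R M)

theorem exteriorPower.toMatrix_map_apply_self {n : ℕ} (f : M →ₗ[R] M)
    (s : Set.powersetCard ι n) :
    LinearMap.toMatrix (b.exteriorPower n) (b.exteriorPower n) (exteriorPower.map n f) s s =
      ((LinearMap.toMatrix b b f).submatrix (Subtype.val : s.val → ι) Subtype.val).det := by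
  rw [LinearMap.toMatrix_apply, exteriorPower.basis_apply, exteriorPower.map_apply_ιMulti_family,
    exteriorPower.basis_repr_apply, exteriorPower.ιMulti_family,
    exteriorPower.ιMultiDual_apply_ιMulti,
    ← det_submatrix_equiv_self (s.val.orderIsoOfFin s.prop).toEquiv, submatrix_submatrix,
    ← det_transpose]
  congr
  ext i j
  simp only [Set.powersetCard.ofFinEmbEquiv_symm_apply, Function.comp_apply,
    Module.Basis.coord_apply, of_apply, RelIso.coe_fn_toEquiv, LinearMap.toMatrix_apply]
  -- `Finset.coe_orderIsoOfFin_apply`, which holds by `rfl` but does not rewrite here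
  rfl

theorem exteriorPower.trace_map_eq_sum_principal_minors (n : ℕ) (f : M →ₗ[R] M) :
    LinearMap.trace R _ (exteriorPower.map n f) =
      ∑ s ∈ Finset.univ.powersetCard n,
        ((LinearMap.toMatrix b b f).submatrix (Subtype.val : s → ι) Subtype.val).det := by
  rw [LinearMap.trace_eq_matrix_trace R (b.exteriorPower n), Matrix.trace,
    Finset.sum_subtype _ fun s => Finset.mem_powersetCard_univ]
  exact Finset.sum_congr rfl fun s _ => exteriorPower.toMatrix_map_apply_self b f s

end Basis

theorem Matrix.charpolyRev_neg {n : Type*} [Fintype n] [DecidableEq n] (A : Matrix n n R) :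
    (-A).charpolyRev = (1 + (X : R[X]) • A.map C).det := by
  rw [Matrix.charpolyRev, Matrix.map_neg _ (map_neg C), smul_neg, sub_neg_eq_add]

theorem LinearMap.reverse_charpoly_neg [Module.Free R M] [Module.Finite R M] {ι : Type*}
    [Fintype ι] [DecidableEq ι] (b : Module.Basis ι R M) (f : M →ₗ[R] M) :
    (LinearMap.charpoly (-f)).reverse =
      (1 + (X : R[X]) • (LinearMap.toMatrix b b f).map C).det := by
  rw [← LinearMap.charpoly_toMatrix (-f) b, Matrix.reverse_charpoly, map_neg,
    Matrix.charpolyRev_neg]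

theorem exteriorPower.trace_map_eq_coeff_reverse_charpoly_neg [Module.Free R M]
    [Module.Finite R M] (n : ℕ) (f : M →ₗ[R] M) :
    LinearMap.trace R _ (exteriorPower.map n f) = (LinearMap.charpoly (-f)).reverse.coeff n := by
  nontriviality R
  rw [LinearMap.reverse_charpoly_neg (Module.finBasis R M),
    Matrix.coeff_det_one_add_X_smul_eq_sum_minors,
    exteriorPower.trace_map_eq_sum_principal_minors (Module.finBasis R M)]

end

/-- For a `d`-dimensional vector space `V` over a field `K` and a linear
endomorphism `f : V → V`, the induced endomorphism `⋀^j f` of the `j`-th exterior power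
(given by restricting the algebra map `ExteriorAlgebra.map f` to the grade-`j` component
`⋀[K]^j V`, which it preserves) satisfies
`Σ_{j=0}^d trace(⋀^j f)·X^j = reverse (charpoly (−f))` in `K[X]`,
where `charpoly(−f) = det(X·id + f)` and `reverse` is polynomial reversal
`p(X) ↦ X^d p(1/X)`. -/
theorem sum_trace_exteriorPower_eq_reverse_charpoly_neg
    (K V : Type*) [Field K] [AddCommGroup V] [Module K V] [FiniteDimensional K V]
    (d : ℕ) (hd : Module.finrank K V = d) (f : V →ₗ[K] V) :
    (∀ j : ℕ, ∀ x ∈ ⋀[K]^j V, ExteriorAlgebra.map f x ∈ ⋀[K]^j V) ∧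
      ∀ h : ∀ j : ℕ, ∀ x ∈ ⋀[K]^j V, ExteriorAlgebra.map f x ∈ ⋀[K]^j V,
        ∑ j ∈ Finset.range (d + 1),
            Polynomial.C
              (LinearMap.trace K (⋀[K]^j V)
                ((ExteriorAlgebra.map f).toLinearMap.restrict (h j))) *
              Polynomial.X ^ j
          = (LinearMap.charpoly (-f)).reverse := by
  refine ⟨fun _ _ => ExteriorAlgebra.map_mem_exteriorPower f, fun h => ?_⟩
  have hdeg : (LinearMap.charpoly (-f)).reverse.natDegree < d + 1 := by
    have := (LinearMap.charpoly (-f)).reverse_natDegree_le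
    rw [LinearMap.charpoly_natDegree, hd] at this
    omega
  conv_rhs => rw [as_sum_range' _ _ hdeg]
  refine Finset.sum_congr rfl fun j _ => ?_
  rw [C_mul_X_pow_eq_monomial, ExteriorAlgebra.restrict_map_eq_exteriorPower_map,
    exteriorPower.trace_map_eq_coeff_reverse_charpoly_neg]
end
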